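/- arXiv:1911.04341 — 3 statements merged into one kernel-verified Lean document; each statement's English description precedes it below -/
import Mathlib

section
/- Let g, h be supported on [0,∞), let σ = 1, and let X = ∫ g dL and Y = ∫ h dL be jointly α-stable with dependence measure U_{g,h}(u,v) = exp(−σ^α‖ug + vh‖_α^α) − exp(−σ^α(‖ug‖_α^α + ‖vh‖_α^α)), where ‖f‖_α^α = ∫_ℝ |f(x)|^α dx. Then for all u, v ∈ ℝ: |U_{g,h}(u,v)| ≤ 2 |uv|^{α/2} ∫_0^∞ |g(x)h(x)|^{α/2} dx. -/
open MeasureTheory Set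
open scoped NNReal

private lemma subadd {p x y : ℝ} (hp0 : 0 ≤ p) (hp1 : p ≤ 1) (hx : 0 ≤ x) (hy : 0 ≤ y) :
    (x + y) ^ p ≤ x ^ p + y ^ p := by
  have h := NNReal.rpow_add_le_add_rpow (x.toNNReal) (y.toNNReal) hp0 hp1
  calc (x + y) ^ p = ((x.toNNReal + y.toNNReal : ℝ≥0) : ℝ) ^ p := by
        rw [NNReal.coe_add, Real.coe_toNNReal _ hx, Real.coe_toNNReal _ hy]
    _ = (((x.toNNReal + y.toNNReal) ^ p : ℝ≥0) : ℝ) := (NNReal.coe_rpow _ _).symm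
    _ ≤ ((x.toNNReal ^ p + y.toNNReal ^ p : ℝ≥0) : ℝ) := NNReal.coe_le_coe.2 h
    _ = x ^ p + y ^ p := by
        rw [NNReal.coe_add, NNReal.coe_rpow, NNReal.coe_rpow,
          Real.coe_toNNReal _ hx, Real.coe_toNNReal _ hy]

private lemma sqr_rpow {p : ℝ} (t : ℝ) (ht : 0 ≤ t) : t ^ (2 * p) = (t ^ p) ^ 2 := by
  rw [mul_comm, Real.rpow_mul ht, Real.rpow_two]

private lemma key {α : ℝ} (hα0 : 0 < α) (hα2 : α ≤ 2) (a b : ℝ) :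
    |(|a + b| ^ α - |a| ^ α - |b| ^ α)| ≤ 2 * |a * b| ^ (α / 2) := by
  set p := α / 2 with hpdef
  have hp0 : 0 < p := by positivity
  have hp1 : p ≤ 1 := by rw [hpdef]; linarith
  set x := |a| ^ p with hxd
  set y := |b| ^ p with hyd
  set c := |a + b| ^ p with hcd
  have hx : 0 ≤ x := Real.rpow_nonneg (abs_nonneg a) p
  have hy : 0 ≤ y := Real.rpow_nonneg (abs_nonneg b) p
  have hc : 0 ≤ c := Real.rpow_nonneg (abs_nonneg _) p
  have habs : |a * b| ^ p = x * y := by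
    rw [abs_mul, Real.mul_rpow (abs_nonneg a) (abs_nonneg b)]
  have e1 : |a + b| ^ α = c ^ 2 := by
    rw [show α = 2 * p by rw [hpdef]; ring, sqr_rpow _ (abs_nonneg _)]
  have e2 : |a| ^ α = x ^ 2 := by
    rw [show α = 2 * p by rw [hpdef]; ring, sqr_rpow _ (abs_nonneg _)]
  have e3 : |b| ^ α = y ^ 2 := by
    rw [show α = 2 * p by rw [hpdef]; ring, sqr_rpow _ (abs_nonneg _)]
  have f1 : c ≤ x + y := by
    calc c ≤ (|a| + |b|) ^ p :=
          Real.rpow_le_rpow (abs_nonneg _) (abs_add_le a b) hp0.le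
      _ ≤ x + y := subadd hp0.le hp1 (abs_nonneg a) (abs_nonneg b)
  have f2 : x ≤ c + y := by
    have h1 : |a| ≤ |a + b| + |b| := by
      have := abs_add_le (a + b) (-b); simpa using this
    calc x ≤ (|a + b| + |b|) ^ p := Real.rpow_le_rpow (abs_nonneg a) h1 hp0.le
      _ ≤ c + y := subadd hp0.le hp1 (abs_nonneg _) (abs_nonneg b)
  have f3 : y ≤ c + x := by
    have h1 : |b| ≤ |a + b| + |a| := by
      have := abs_add_le (a + b) (-a); simpa [add_comm] using this
    calc y ≤ (|a + b| + |a|) ^ p := Real.rpow_le_rpow (abs_nonneg b) h1 hp0.le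
      _ ≤ c + x := subadd hp0.le hp1 (abs_nonneg _) (abs_nonneg a)
  rw [e1, e2, e3, habs, abs_le]
  constructor
  · nlinarith [mul_nonneg (by linarith : (0:ℝ) ≤ c - x + y) (by linarith : (0:ℝ) ≤ c + x - y)]
  · nlinarith [mul_nonneg (by linarith : (0:ℝ) ≤ x + y - c) (by linarith : (0:ℝ) ≤ x + y + c)]

private lemma exp_lip {a b : ℝ} (ha : 0 ≤ a) (hb : 0 ≤ b) :
    |Real.exp (-a) - Real.exp (-b)| ≤ |a - b| := by
  have main : ∀ s t : ℝ, 0 ≤ s → 0 ≤ t → Real.exp (-s) - Real.exp (-t) ≤ |s - t| := by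
    intro s t hs ht
    rcases le_total t s with H | H
    · have h0 : Real.exp (-s) ≤ Real.exp (-t) := Real.exp_le_exp.2 (by linarith)
      have : Real.exp (-s) - Real.exp (-t) ≤ 0 := by linarith
      exact this.trans (abs_nonneg _)
    · have h1 : s - t + 1 ≤ Real.exp (s - t) := Real.add_one_le_exp _
      have h2 : Real.exp (-s) ≤ 1 := Real.exp_le_one_iff.2 (by linarith)
      have h3 : Real.exp (-t) = Real.exp (-s) * Real.exp (s - t) := by
        rw [← Real.exp_add]; ring_nf
      have h4 : 0 < Real.exp (-s) := Real.exp_pos _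
      have h5 : |s - t| = t - s := by rw [abs_of_nonpos (by linarith)]; ring
      rw [h5]
      nlinarith
  rw [abs_sub_le_iff]
  constructor
  · exact main a b ha hb
  · have := main b a hb ha
    rwa [abs_sub_comm] at this

theorem stmt_12 (α : ℝ) (hα : α ∈ Set.Ioo (0:ℝ) 2) (g h : ℝ → ℝ)
    (hg : Measurable g) (hh : Measurable h)
    (hgi : IntegrableOn (fun x => |g x| ^ α) (Ioi 0))
    (hhi : IntegrableOn (fun x => |h x| ^ α) (Ioi 0)) :
    ∀ u v : ℝ,
      |Real.exp (-(∫ x in Ioi (0:ℝ), |u * g x + v * h x| ^ α)) -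
        Real.exp (-((∫ x in Ioi (0:ℝ), |u * g x| ^ α) + ∫ x in Ioi (0:ℝ), |v * h x| ^ α))| ≤
      2 * |u * v| ^ (α / 2) * ∫ x in Ioi (0:ℝ), |g x * h x| ^ (α / 2) := by
  obtain ⟨hα0, hα2⟩ := hα
  intro u v
  set p := α / 2 with hpdef
  have hp0 : 0 < p := by positivity
  have const_abs : ∀ (w : ℝ) (f : ℝ → ℝ) (x : ℝ), |w * f x| ^ α = |w| ^ α * |f x| ^ α := by
    intro w f x; rw [abs_mul, Real.mul_rpow (abs_nonneg _) (abs_nonneg _)]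
  have i_ug : IntegrableOn (fun x => |u * g x| ^ α) (Ioi 0) := by
    have : (fun x => |u * g x| ^ α) = fun x => |u| ^ α * |g x| ^ α := funext (const_abs u g)
    rw [this]; exact hgi.const_mul _
  have i_vh : IntegrableOn (fun x => |v * h x| ^ α) (Ioi 0) := by
    have : (fun x => |v * h x| ^ α) = fun x => |v| ^ α * |h x| ^ α := funext (const_abs v h)
    rw [this]; exact hhi.const_mul _
  have gh_bound : ∀ x : ℝ, |g x * h x| ^ p ≤ |g x| ^ α + |h x| ^ α := by
    intro x
    have sqr : ∀ t : ℝ, 0 ≤ t → (t * t) ^ p = t ^ α := by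
      intro t ht
      rw [Real.mul_rpow ht ht, ← Real.rpow_add' ht (by positivity),
        show p + p = α by rw [hpdef]; ring]
    rcases le_total |g x| |h x| with H | H
    · calc |g x * h x| ^ p = (|g x| * |h x|) ^ p := by rw [abs_mul]
        _ ≤ (|h x| * |h x|) ^ p := Real.rpow_le_rpow (by positivity)
              (mul_le_mul_of_nonneg_right H (abs_nonneg _)) hp0.le
        _ = |h x| ^ α := sqr _ (abs_nonneg _)
        _ ≤ |g x| ^ α + |h x| ^ α := le_add_of_nonneg_left (by positivity)
    · calc |g x * h x| ^ p = (|g x| * |h x|) ^ p := by rw [abs_mul]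
        _ ≤ (|g x| * |g x|) ^ p := Real.rpow_le_rpow (by positivity)
              (mul_le_mul_of_nonneg_left H (abs_nonneg _)) hp0.le
        _ = |g x| ^ α := sqr _ (abs_nonneg _)
        _ ≤ |g x| ^ α + |h x| ^ α := le_add_of_nonneg_right (by positivity)
  have meas_gh : Measurable fun x => |g x * h x| ^ p := ((hg.mul hh).abs).pow_const p
  have i_gh : IntegrableOn (fun x => |g x * h x| ^ p) (Ioi 0) := by
    refine Integrable.mono' (hgi.add hhi) meas_gh.aestronglyMeasurable ?_
    filter_upwards with x
    rw [Real.norm_eq_abs, abs_of_nonneg (Real.rpow_nonneg (abs_nonneg _) p)]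
    exact gh_bound x
  have cross : ∀ x : ℝ, |u * g x * (v * h x)| ^ p = |u * v| ^ p * |g x * h x| ^ p := by
    intro x
    rw [show u * g x * (v * h x) = (u * v) * (g x * h x) by ring, abs_mul,
      Real.mul_rpow (abs_nonneg _) (abs_nonneg _)]
  have meas_sum : Measurable fun x => |u * g x + v * h x| ^ α :=
    (((hg.const_mul u).add (hh.const_mul v)).abs).pow_const α
  have i_sum : IntegrableOn (fun x => |u * g x + v * h x| ^ α) (Ioi 0) := by
    refine Integrable.mono'
      ((i_ug.add i_vh).add ((i_gh.const_mul (|u * v| ^ p)).const_mul 2))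
      meas_sum.aestronglyMeasurable ?_
    filter_upwards with x
    rw [Real.norm_eq_abs, abs_of_nonneg (Real.rpow_nonneg (abs_nonneg _) α)]
    have hk := (abs_le.1 (key hα0 hα2.le (u * g x) (v * h x))).2
    rw [cross x] at hk
    simp only [Pi.add_apply]
    linarith
  have hA0 : 0 ≤ ∫ x in Ioi (0:ℝ), |u * g x + v * h x| ^ α :=
    integral_nonneg fun x => Real.rpow_nonneg (abs_nonneg _) α
  have hB0 : 0 ≤ (∫ x in Ioi (0:ℝ), |u * g x| ^ α) + ∫ x in Ioi (0:ℝ), |v * h x| ^ α :=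
    add_nonneg (integral_nonneg fun x => Real.rpow_nonneg (abs_nonneg _) α)
      (integral_nonneg fun x => Real.rpow_nonneg (abs_nonneg _) α)
  have i1 : IntegrableOn (fun x => |u * g x + v * h x| ^ α - |u * g x| ^ α) (Ioi 0) :=
    i_sum.sub i_ug
  have i2 : IntegrableOn
      (fun x => |u * g x + v * h x| ^ α - |u * g x| ^ α - |v * h x| ^ α) (Ioi 0) :=
    i1.sub i_vh
  have eqint : ∫ x in Ioi (0:ℝ),
      (|u * g x + v * h x| ^ α - |u * g x| ^ α - |v * h x| ^ α)
      = (∫ x in Ioi (0:ℝ), |u * g x + v * h x| ^ α) -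
        ((∫ x in Ioi (0:ℝ), |u * g x| ^ α) + ∫ x in Ioi (0:ℝ), |v * h x| ^ α) := by
    rw [integral_sub i1 i_vh, integral_sub i_sum i_ug]
    ring
  calc |Real.exp (-(∫ x in Ioi (0:ℝ), |u * g x + v * h x| ^ α)) -
        Real.exp (-((∫ x in Ioi (0:ℝ), |u * g x| ^ α) + ∫ x in Ioi (0:ℝ), |v * h x| ^ α))|
      ≤ |(∫ x in Ioi (0:ℝ), |u * g x + v * h x| ^ α) -
          ((∫ x in Ioi (0:ℝ), |u * g x| ^ α) + ∫ x in Ioi (0:ℝ), |v * h x| ^ α)| :=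
        exp_lip hA0 hB0
    _ = |∫ x in Ioi (0:ℝ),
          (|u * g x + v * h x| ^ α - |u * g x| ^ α - |v * h x| ^ α)| := by rw [eqint]
    _ ≤ ∫ x in Ioi (0:ℝ),
          |(|u * g x + v * h x| ^ α - |u * g x| ^ α - |v * h x| ^ α)| := by
        simpa [Real.norm_eq_abs] using
          norm_integral_le_integral_norm (μ := volume.restrict (Ioi (0:ℝ)))
            (fun x => |u * g x + v * h x| ^ α - |u * g x| ^ α - |v * h x| ^ α)
    _ ≤ ∫ x in Ioi (0:ℝ), 2 * |u * v| ^ p * |g x * h x| ^ p := by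
        refine integral_mono i2.abs (i_gh.const_mul _) ?_
        intro x
        have hk := key hα0 hα2.le (u * g x) (v * h x)
        rw [cross x] at hk
        simpa [mul_assoc] using hk
    _ = 2 * |u * v| ^ p * ∫ x in Ioi (0:ℝ), |g x * h x| ^ p := integral_const_mul _ _
end

section
/- Let h_k(x) = ∑_{j=0}^k (−1)^j C(k,j) (x − j)_+^{H − 1/α} with H ∈ (0,1), α ∈ (0,2), k ≥ 1. Then h_k(x) ~ q · x^{H − 1/α − k} as x → ∞, where q = ∏_{i=0}^{k−1} (H − 1/α − i); i.e., h_k(x)/x^{H−1/α−k} → q. -/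
/-!
With `g_a(x) = x_+^a`, the sum in the theorem is the forward difference `Δ^k g_a (x - k)`.
Differentiation commutes with `Δ` and `g_a' = a g_{a-1}` on `(0, ∞)`, so the mean value theorem
gives `Δ^{k+1} g_a (x) = a Δ^k g_{a-1} (ξ)` for some `ξ ∈ (x, x + 1)`. Since `ξ / x → 1`,
induction on `k` (for all exponents `a` at once) yields `Δ^k g_a (x) / x^(a-k) → ∏_{i<k} (a - i)`,
and the shift by `k` is harmless because `(x - k) / x → 1`.
-/

open Filter Topology Finset
open scoped fwdDiff

noncomputable def posRpow (a x : ℝ) : ℝ := if 0 < x then x ^ a else 0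

lemma hasDerivAt_posRpow (a : ℝ) {x : ℝ} (hx : 0 < x) :
    HasDerivAt (posRpow a) (a * posRpow (a - 1) x) x := by
  have hloc : (fun y => y ^ a) =ᶠ[𝓝 x] posRpow a := by
    filter_upwards [Ioi_mem_nhds hx] with y hy
    simp [posRpow, Set.mem_Ioi.mp hy]
  simpa [posRpow, hx] using
    (Real.hasDerivAt_rpow_const (Or.inl hx.ne')).congr_of_eventuallyEq hloc.symm

lemma hasDerivAt_fwdDiff_iter {𝕜 F : Type*} [NontriviallyNormedField 𝕜] [NormedAddCommGroup F]
    [NormedSpace 𝕜 F] {f f' : 𝕜 → F} {h : 𝕜} (n : ℕ) {x : 𝕜}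
    (hf : ∀ j ≤ n, HasDerivAt f (f' (x + j • h)) (x + j • h)) :
    HasDerivAt ((Δ_[h])^[n] f) ((Δ_[h])^[n] f' x) x := by
  induction n generalizing f f' with
  | zero => simpa using hf 0 le_rfl
  | succ n ih =>
    rw [Function.iterate_succ, Function.comp_apply]
    refine ih fun j hj => ?_
    have h₁ := hf (j + 1) (by omega)
    rw [succ_nsmul, ← add_assoc] at h₁
    exact (h₁.comp_add_const _ _).sub (hf j (by omega))

lemma exists_fwdDiff_iter_succ_eq_mul {f f' : ℝ → ℝ} {h x : ℝ} (hh : 0 < h) (k : ℕ)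
    (hf : ∀ y, x ≤ y → HasDerivAt f (f' y) y) :
    ∃ c ∈ Set.Ioo x (x + h), (Δ_[h])^[k + 1] f x = h * (Δ_[h])^[k] f' c := by
  have hderiv : ∀ y, x ≤ y → HasDerivAt ((Δ_[h])^[k] f) ((Δ_[h])^[k] f' y) y := fun y hy =>
    hasDerivAt_fwdDiff_iter k fun j _ => hf _ (by
      have : 0 ≤ j • h := nsmul_nonneg hh.le j
      linarith)
  obtain ⟨c, hc, hslope⟩ := exists_hasDerivAt_eq_slope ((Δ_[h])^[k] f) ((Δ_[h])^[k] f')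
    (by linarith : x < x + h) (fun y hy => (hderiv y hy.1).continuousAt.continuousWithinAt)
    (fun y hy => hderiv y hy.1.le)
  refine ⟨c, hc, ?_⟩
  rw [Function.iterate_succ_apply', hslope, fwdDiff, add_sub_cancel_left,
    mul_div_cancel₀ _ hh.ne']

lemma sum_choose_mul_sub_eq_fwdDiff_iter {R : Type*} [CommRing R] (f : R → R) (k : ℕ) (x : R) :
    ∑ j ∈ range (k + 1), (-1 : R) ^ j * k.choose j * f (x - j) = (Δ_[1])^[k] f (x - k) := by
  rw [fwdDiff_iter_eq_sum_shift, ← sum_range_reflect]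
  refine sum_congr rfl fun j hj => ?_
  have hj : j ≤ k := Nat.lt_succ_iff.mp (mem_range.mp hj)
  rw [Nat.add_sub_cancel, Nat.choose_symm hj, zsmul_eq_mul, Nat.cast_sub hj]
  push_cast
  ring_nf

lemma tendsto_div_self_of_le_of_le {u : ℝ → ℝ} (c d : ℝ) (hc : ∀ᶠ x in atTop, x + c ≤ u x)
    (hd : ∀ᶠ x in atTop, u x ≤ x + d) : Tendsto (fun x => u x / x) atTop (𝓝 1) := by
  have hlim : ∀ e : ℝ, Tendsto (fun x : ℝ => (x + e) / x) atTop (𝓝 1) := fun e => by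
    have : Tendsto (fun x : ℝ => 1 + e * x⁻¹) atTop (𝓝 (1 + e * 0)) :=
      (tendsto_inv_atTop_zero.const_mul e).const_add 1
    rw [mul_zero, add_zero] at this
    refine this.congr' ?_
    filter_upwards [eventually_gt_atTop 0] with x hx
    field_simp
  refine tendsto_of_tendsto_of_tendsto_of_le_of_le' (hlim c) (hlim d) ?_ ?_
  · filter_upwards [hc, eventually_gt_atTop 0] with x hx hx0
    exact div_le_div_of_nonneg_right hx hx0.le
  · filter_upwards [hd, eventually_gt_atTop 0] with x hx hx0
    exact div_le_div_of_nonneg_right hx hx0.le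

lemma Filter.Tendsto.comp_div_rpow {f u : ℝ → ℝ} {b L : ℝ}
    (hf : Tendsto (fun y => f y / y ^ b) atTop (𝓝 L))
    (hu : Tendsto (fun x => u x / x) atTop (𝓝 1)) :
    Tendsto (fun x => f (u x) / x ^ b) atTop (𝓝 L) := by
  have hu_top : Tendsto u atTop atTop := by
    refine (hu.pos_mul_atTop one_pos tendsto_id).congr' ?_
    filter_upwards [eventually_ne_atTop 0] with x hx
    exact div_mul_cancel₀ _ hx
  have := (hf.comp hu_top).mul (hu.rpow_const (p := b) (Or.inl one_ne_zero))
  rw [Real.one_rpow, mul_one] at this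
  refine this.congr' ?_
  filter_upwards [hu_top.eventually_gt_atTop 0, eventually_gt_atTop 0] with x hux hx
  rw [Function.comp_apply, Real.div_rpow hux.le hx.le]
  field_simp

theorem tendsto_fwdDiff_iter_posRpow_div (k : ℕ) (a : ℝ) :
    Tendsto (fun x => (Δ_[1])^[k] (posRpow a) x / x ^ (a - k)) atTop
      (𝓝 (∏ i ∈ range k, (a - i))) := by
  induction k generalizing a with
  | zero =>
    refine tendsto_const_nhds.congr' ?_
    filter_upwards [eventually_gt_atTop 0] with x hx
    simp [posRpow, hx, (Real.rpow_pos_of_pos hx a).ne']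
  | succ k ih =>
    have hmvt : ∀ x, 0 < x → ∃ c ∈ Set.Ioo x (x + 1),
        (Δ_[1])^[k + 1] (posRpow a) x = a * (Δ_[1])^[k] (posRpow (a - 1)) c := fun x hx => by
      obtain ⟨c, hc, heq⟩ := exists_fwdDiff_iter_succ_eq_mul one_pos k
        fun y hy => hasDerivAt_posRpow a (hx.trans_le hy)
      refine ⟨c, hc, ?_⟩
      rw [heq, one_mul, ← smul_eq_mul, ← Pi.smul_apply, ← fwdDiff_iter_const_smul]
      rfl
    choose! ξ hξ using hmvt
    have hξ_div : Tendsto (fun x => ξ x / x) atTop (𝓝 1) := by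
      refine tendsto_div_self_of_le_of_le 0 1 ?_ ?_ <;>
        filter_upwards [eventually_gt_atTop 0] with x hx
      · linarith [(hξ x hx).1.1]
      · exact (hξ x hx).1.2.le
    have := ((ih (a - 1)).comp_div_rpow hξ_div).const_mul a
    rw [prod_range_succ', Nat.cast_zero, sub_zero, mul_comm]
    have hprod : ∏ i ∈ range k, (a - ↑(i + 1)) = ∏ i ∈ range k, (a - 1 - i) :=
      prod_congr rfl fun i _ => by push_cast; ring
    rw [hprod]
    refine this.congr' ?_
    filter_upwards [eventually_gt_atTop 0] with x hx
    rw [(hξ x hx).2, Nat.cast_succ, sub_add_eq_sub_sub_swap, mul_div_assoc]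

theorem stmt_16_general (α H : ℝ) (k : ℕ) :
    Tendsto (fun x : ℝ =>
        (∑ j ∈ Finset.range (k + 1), (-1 : ℝ) ^ j * (k.choose j) *
          (if 0 < x - j then (x - (j : ℝ)) ^ (H - 1 / α) else 0)) / x ^ (H - 1 / α - k))
      atTop (𝓝 (∏ i ∈ Finset.range k, (H - 1 / α - (i : ℝ)))) := by
  have hshift : Tendsto (fun x : ℝ => (x - k) / x) atTop (𝓝 1) :=
    tendsto_div_self_of_le_of_le (-k) (-k) (.of_forall fun x => (sub_eq_add_neg x k).ge)
      (.of_forall fun x => (sub_eq_add_neg x k).le)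
  refine ((tendsto_fwdDiff_iter_posRpow_div k _).comp_div_rpow hshift).congr fun x => ?_
  rw [← sum_choose_mul_sub_eq_fwdDiff_iter]
  rfl

theorem stmt_16 (α H : ℝ) (hα : α ∈ Set.Ioo (0:ℝ) 2) (hH : H ∈ Set.Ioo (0:ℝ) 1)
    (k : ℕ) (hk : 1 ≤ k) :
    Tendsto (fun x : ℝ =>
        (∑ j ∈ Finset.range (k + 1), (-1 : ℝ) ^ j * (k.choose j) *
          (if 0 < x - j then (x - (j : ℝ)) ^ (H - 1 / α) else 0)) / x ^ (H - 1 / α - k))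
      atTop (𝓝 (∏ i ∈ Finset.range k, (H - 1 / α - (i : ℝ)))) :=
  stmt_16_general α H k
end

section
/- Let β ∈ (1, 2), q = α/β with α ∈ (0,2), and p_α a probability density on ℝ satisfying p_α(x) ≤ C(1 + |x|)^{−1−α}. Then sup_{n ≥ 1} n^{1 − 2/β} ∫_1^∞ min(n^{1/β}, x^q)² p_α(x) dx < ∞. -/
open MeasureTheory Set

theorem stmt_17 (α β C : ℝ) (hα : α ∈ Set.Ioo (0:ℝ) 2) (hβ : β ∈ Set.Ioo (1:ℝ) 2)
    (hC : 0 < C) (q : ℝ) (hq : q = α / β)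
    (p : ℝ → ℝ) (hp : Measurable p) (hp0 : ∀ x, 0 ≤ p x)
    (hpd : ∀ x, p x ≤ C * (1 + |x|) ^ (-1 - α)) :
    ∃ M : ℝ, ∀ n : ℕ, 1 ≤ n →
      (n : ℝ) ^ ((1 : ℝ) - 2 / β) *
        ∫ x in Ioi (1:ℝ), (min ((n : ℝ) ^ ((1:ℝ) / β)) (x ^ q)) ^ 2 * p x ≤ M := by
  obtain ⟨hα0, hα2⟩ := hα
  obtain ⟨hβ1, hβ2⟩ := hβ
  have hβ0 : 0 < β := lt_trans one_pos hβ1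
  have hq0 : 0 < q := by rw [hq]; positivity
  have hd : 0 < 2 * q - α := by
    have h : 2 * q - α = α * (2 - β) / β := by rw [hq]; field_simp
    rw [h]
    have h2 : 0 < 2 - β := by linarith
    positivity
  refine ⟨C / (2 * q - α) + C / α, ?_⟩
  intro n hn
  set N : ℝ := (n : ℝ) with hN
  have hN1 : 1 ≤ N := by rw [hN]; exact_mod_cast hn
  have hN0 : 0 < N := lt_of_lt_of_le one_pos hN1
  set T : ℝ := N ^ (α⁻¹) with hT
  have hT1 : 1 ≤ T := Real.one_le_rpow hN1 (by positivity)
  have hT0 : 0 < T := lt_of_lt_of_le one_pos hT1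
  set A : ℝ := N ^ ((1:ℝ)/β) with hA
  have hA0 : 0 < A := Real.rpow_pos_of_pos hN0 _
  set f : ℝ → ℝ := fun x => (min A (x ^ q)) ^ 2 * p x with hf
  have hfm : Measurable f :=
    ((measurable_const.min (Real.continuous_rpow_const hq0.le).measurable).pow_const 2).mul hp
  have hf0 : ∀ x, 0 ≤ f x := fun x => mul_nonneg (sq_nonneg _) (hp0 x)
  -- pointwise bounds
  have hbound2 : ∀ x ∈ Ioi (1:ℝ), f x ≤ C * A ^ 2 * x ^ (-1 - α) := by
    intro x hx
    have hx1 : (1:ℝ) < x := hx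
    have hx0 : 0 < x := lt_trans one_pos hx1
    have hmin0 : 0 ≤ min A (x ^ q) := le_min hA0.le (Real.rpow_pos_of_pos hx0 q).le
    have h1 : (min A (x ^ q)) ^ 2 ≤ A ^ 2 := pow_le_pow_left₀ hmin0 (min_le_left _ _) 2
    have h2 : p x ≤ C * x ^ (-1 - α) := by
      refine le_trans (hpd x) ?_
      have : (1 + |x|) ^ (-1 - α) ≤ x ^ (-1 - α) := by
        apply Real.rpow_le_rpow_of_nonpos hx0
        · rw [abs_of_pos hx0]; linarith
        · linarith
      nlinarith [this]
    calc f x ≤ A ^ 2 * (C * x ^ (-1 - α)) :=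
          mul_le_mul h1 h2 (hp0 x) (sq_nonneg _)
      _ = C * A ^ 2 * x ^ (-1 - α) := by ring
  have hbound1 : ∀ x ∈ Ioc (1:ℝ) T, f x ≤ C * x ^ (2 * q - 1 - α) := by
    intro x hx
    have hx1 : (1:ℝ) < x := hx.1
    have hx0 : 0 < x := lt_trans one_pos hx1
    have hmin0 : 0 ≤ min A (x ^ q) := le_min hA0.le (Real.rpow_pos_of_pos hx0 q).le
    have h1 : (min A (x ^ q)) ^ 2 ≤ (x ^ q) ^ 2 := pow_le_pow_left₀ hmin0 (min_le_right _ _) 2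
    have h2 : p x ≤ C * x ^ (-1 - α) := by
      refine le_trans (hpd x) ?_
      have : (1 + |x|) ^ (-1 - α) ≤ x ^ (-1 - α) := by
        apply Real.rpow_le_rpow_of_nonpos hx0
        · rw [abs_of_pos hx0]; linarith
        · linarith
      nlinarith [this]
    have key : (x ^ q) ^ 2 * (C * x ^ (-1 - α)) = C * x ^ (2 * q - 1 - α) := by
      rw [← Real.rpow_natCast (x ^ q) 2, ← Real.rpow_mul hx0.le,
        show q * ((2:ℕ):ℝ) = 2 * q by push_cast; ring,
        mul_comm (x ^ (2 * q)) (C * x ^ (-1 - α)), mul_assoc, ← Real.rpow_add hx0]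
      congr 1
      ring
    calc f x ≤ (x ^ q) ^ 2 * (C * x ^ (-1 - α)) :=
          mul_le_mul h1 h2 (hp0 x) (sq_nonneg _)
      _ = C * x ^ (2 * q - 1 - α) := key
  -- integrability
  have hig1 : IntegrableOn (fun x => C * x ^ (2 * q - 1 - α)) (Ioc 1 T) := by
    have := (intervalIntegral.intervalIntegrable_rpow' (a := 1) (b := T)
      (by linarith : (-1:ℝ) < 2 * q - 1 - α)).1
    exact this.const_mul C
  have hig2 : ∀ c : ℝ, 0 < c → IntegrableOn (fun x => C * A ^ 2 * x ^ (-1 - α)) (Ioi c) := by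
    intro c hc
    exact (integrableOn_Ioi_rpow_of_lt (by linarith) hc).const_mul _
  have hfi1 : IntegrableOn f (Ioc 1 T) := by
    refine (hig1.mono' hfm.aestronglyMeasurable.restrict ?_)
    refine (ae_restrict_iff' measurableSet_Ioc).mpr (ae_of_all _ ?_)
    intro x hx
    rw [Real.norm_of_nonneg (hf0 x)]
    exact hbound1 x hx
  have hfi2 : IntegrableOn f (Ioi T) := by
    refine ((hig2 T hT0).mono' hfm.aestronglyMeasurable.restrict ?_)
    refine (ae_restrict_iff' measurableSet_Ioi).mpr (ae_of_all _ ?_)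
    intro x hx
    rw [Real.norm_of_nonneg (hf0 x)]
    exact hbound2 x (lt_of_le_of_lt hT1 hx)
  -- split
  have hsplit : ∫ x in Ioi (1:ℝ), f x = (∫ x in Ioc 1 T, f x) + ∫ x in Ioi T, f x := by
    rw [← Ioc_union_Ioi_eq_Ioi hT1,
      setIntegral_union (Ioc_disjoint_Ioi le_rfl) measurableSet_Ioi hfi1 hfi2]
  have hI1 : ∫ x in Ioc 1 T, f x ≤ C * (T ^ (2 * q - α) / (2 * q - α)) := by
    refine le_trans (setIntegral_mono_on hfi1 hig1 measurableSet_Ioc hbound1) ?_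
    rw [MeasureTheory.integral_const_mul]
    have : ∫ x in Ioc 1 T, x ^ (2 * q - 1 - α) =
        (T ^ (2 * q - α) - 1) / (2 * q - α) := by
      rw [← intervalIntegral.integral_of_le hT1,
        integral_rpow (Or.inl (by linarith : (-1:ℝ) < 2 * q - 1 - α))]
      norm_num
      ring_nf
    rw [this]
    gcongr
    linarith
  have hI2 : ∫ x in Ioi T, f x ≤ C * A ^ 2 * (T ^ (-α) / α) := by
    refine le_trans (setIntegral_mono_on hfi2 (hig2 T hT0) measurableSet_Ioi
      (fun x hx => hbound2 x (lt_of_le_of_lt hT1 hx))) ?_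
    rw [MeasureTheory.integral_const_mul]
    rw [integral_Ioi_rpow_of_lt (by linarith : (-1 - α) < -1) hT0]
    have : -T ^ (-1 - α + 1) / (-1 - α + 1) = T ^ (-α) / α := by
      rw [show (-1 - α + 1) = -α by ring]
      field_simp
    rw [this]
  -- exponent identities
  have hTe1 : T ^ (2 * q - α) = N ^ (2 / β - 1) := by
    rw [hT, ← Real.rpow_mul hN0.le]
    congr 1
    rw [hq]
    field_simp
  have hA2 : A ^ 2 = N ^ (2 / β) := by
    rw [hA, ← Real.rpow_natCast (N ^ ((1:ℝ)/β)) 2, ← Real.rpow_mul hN0.le]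
    congr 1
    push_cast
    ring
  have hTe2 : T ^ (-α) = N ^ (-1 : ℝ) := by
    rw [hT, ← Real.rpow_mul hN0.le]
    congr 1
    field_simp
  have hsum : ∫ x in Ioi (1:ℝ), f x ≤
      C * (T ^ (2 * q - α) / (2 * q - α)) + C * A ^ 2 * (T ^ (-α) / α) := by
    rw [hsplit]; exact add_le_add hI1 hI2
  have huv : N ^ ((1:ℝ) - 2 / β) * N ^ (2 / β - 1) = 1 := by
    rw [← Real.rpow_add hN0]
    norm_num
  have huwz : N ^ ((1:ℝ) - 2 / β) * N ^ (2 / β) * N ^ (-1 : ℝ) = 1 := by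
    rw [← Real.rpow_add hN0, ← Real.rpow_add hN0]
    norm_num
  calc N ^ ((1:ℝ) - 2 / β) * ∫ x in Ioi (1:ℝ), f x
      ≤ N ^ ((1:ℝ) - 2 / β) *
        (C * (T ^ (2 * q - α) / (2 * q - α)) + C * A ^ 2 * (T ^ (-α) / α)) :=
        mul_le_mul_of_nonneg_left hsum (Real.rpow_pos_of_pos hN0 _).le
    _ = C / (2 * q - α) + C / α := by
        rw [hTe1, hA2, hTe2, mul_add,
          show N ^ ((1:ℝ) - 2/β) * (C * (N ^ (2/β - 1) / (2*q - α))) =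
            C / (2*q - α) * (N ^ ((1:ℝ) - 2/β) * N ^ (2/β - 1)) from by ring,
          show N ^ ((1:ℝ) - 2/β) * (C * N ^ (2/β) * (N ^ (-1:ℝ) / α)) =
            C / α * (N ^ ((1:ℝ) - 2/β) * N ^ (2/β) * N ^ (-1:ℝ)) from by ring,
          huv, huwz, mul_one, mul_one]
end
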